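/- arXiv:1310.2810 — 2 statements merged into one kernel-verified Lean document; each statement's English description precedes it below -/
import Mathlib

section
/- If g2, g3 ∈ ℝ[t] satisfy Δ := g2³ - 27g3² = c·t^a·(1-t)^b with c > 0 and a,b ≥ 1, and 2g2g3' - 3g2'g3 = c'·t^{a'}·(1-t)^{b'} with c' ≠ 0, and g2(0), g2(1) > 0 with g3(0)·g3(1) < 0, then a' = a - 1 and b' = b - 1. -/
/-!
Write `Δ = g₂³ - 27g₃²` and `P = 2g₂g₃' - 3g₂'g₃`. Differentiating `Δ` gives the identity
`g₂² P = 2g₃' Δ - g₃ Δ'`. At a root `x` of `Δ` with `g₂(x) ≠ 0` also `g₃(x) ≠ 0`, so in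
characteristic zero `g₃ Δ'` vanishes at `x` to order exactly `ord_x Δ - 1`, while `2g₃' Δ`
vanishes to order at least `ord_x Δ`. Hence `ord_x P = ord_x Δ - 1`; at `x = 0` and `x = 1` this
reads `a' = a - 1` and `b' = b - 1`.
-/

open Polynomial

namespace Polynomial

section CommRing

variable {R : Type*} [CommRing R]

lemma rootMultiplicity_sub_of_pow_dvd {p q : R[X]} {x : R} (hq : q ≠ 0)
    (hp : (X - C x) ^ (rootMultiplicity x q + 1) ∣ p) :
    rootMultiplicity x (p - q) = rootMultiplicity x q := by
  have hq_not_dvd := pow_rootMultiplicity_not_dvd hq x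
  have hpq : p - q ≠ 0 := fun h => hq_not_dvd (by rwa [sub_eq_zero.1 h] at hp)
  refine le_antisymm ((rootMultiplicity_le_iff hpq x _).2 fun h => ?_) ?_
  · exact hq_not_dvd (by simpa using dvd_sub hp h)
  · rw [le_rootMultiplicity_iff hpq]
    exact dvd_sub ((pow_dvd_pow _ (Nat.le_succ _)).trans hp) (pow_rootMultiplicity_dvd q x)

lemma sq_mul_weighted_wronskian_eq (g₂ g₃ : R[X]) :
    g₂ ^ 2 * (2 * g₂ * derivative g₃ - 3 * derivative g₂ * g₃) =
      2 * derivative g₃ * (g₂ ^ 3 - 27 * g₃ ^ 2) - g₃ * derivative (g₂ ^ 3 - 27 * g₃ ^ 2) := by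
  simp only [derivative_sub, derivative_mul, derivative_pow, derivative_ofNat, Nat.cast_ofNat,
    C_ofNat]
  ring

end CommRing

section IsDomain

variable {R : Type*} [CommRing R] [IsDomain R] {c : R}

lemma rootMultiplicity_mul_of_not_isRoot {p : R[X]} {x : R} (hp : ¬p.IsRoot x) (q : R[X]) :
    rootMultiplicity x (p * q) = rootMultiplicity x q := by
  rcases eq_or_ne q 0 with rfl | hq
  · simp
  have hp0 : p ≠ 0 := fun h => hp (by simp [h])
  rw [rootMultiplicity_mul (mul_ne_zero hp0 hq), rootMultiplicity_eq_zero hp, zero_add]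

lemma rootMultiplicity_zero_C_mul_X_pow_mul_one_sub_X_pow (hc : c ≠ 0) (a b : ℕ) :
    rootMultiplicity 0 (C c * X ^ a * (1 - X) ^ b) = a := by
  have h : C c * X ^ a * (1 - X) ^ b = C c * (1 - X) ^ b * (X - C 0) ^ a := by
    rw [C_0, sub_zero]; ring
  rw [h, rootMultiplicity_mul_of_not_isRoot (by simp [hc]), rootMultiplicity_X_sub_C_pow]

lemma rootMultiplicity_one_C_mul_X_pow_mul_one_sub_X_pow (hc : c ≠ 0) (a b : ℕ) :
    rootMultiplicity 1 (C c * X ^ a * (1 - X) ^ b) = b := by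
  have h : C c * X ^ a * (1 - X) ^ b = C ((-1) ^ b * c) * X ^ a * (X - C 1) ^ b := by
    rw [map_one, ← neg_sub, neg_pow, C_mul, map_pow, map_neg, map_one]; ring
  rw [h, rootMultiplicity_mul_of_not_isRoot (by simp [hc]), rootMultiplicity_X_sub_C_pow]

variable [CharZero R]

lemma rootMultiplicity_mul_sub_mul_derivative {f g : R[X]} {x : R} (hf : f ≠ 0)
    (hfx : f.IsRoot x) (hgx : ¬g.IsRoot x) (q : R[X]) :
    rootMultiplicity x (q * f - g * derivative f) = rootMultiplicity x f - 1 := by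
  have hpos : 0 < rootMultiplicity x f := (rootMultiplicity_pos hf).2 hfx
  have hmult : rootMultiplicity x (g * derivative f) = rootMultiplicity x f - 1 := by
    rw [rootMultiplicity_mul_of_not_isRoot hgx, derivative_rootMultiplicity_of_root hfx]
  have hf' : g * derivative f ≠ 0 := by
    refine mul_ne_zero (fun h => hgx (by simp [h])) fun hder => hf ?_
    rw [eq_C_of_derivative_eq_zero hder] at hfx ⊢
    simpa using hfx
  rw [← hmult]
  refine rootMultiplicity_sub_of_pow_dvd hf' (Dvd.dvd.mul_left ?_ q)
  rw [hmult, Nat.sub_add_cancel hpos]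
  exact pow_rootMultiplicity_dvd f x

lemma rootMultiplicity_weighted_wronskian {g₂ g₃ : R[X]} {x : R} (hΔ : g₂ ^ 3 - 27 * g₃ ^ 2 ≠ 0)
    (hΔx : (g₂ ^ 3 - 27 * g₃ ^ 2).IsRoot x) (hg₂ : ¬g₂.IsRoot x) :
    rootMultiplicity x (2 * g₂ * derivative g₃ - 3 * derivative g₂ * g₃) =
      rootMultiplicity x (g₂ ^ 3 - 27 * g₃ ^ 2) - 1 := by
  have hg₃ : ¬g₃.IsRoot x := fun h => hg₂ <| by
    simp only [IsRoot, eval_sub, eval_mul, eval_pow, eval_ofNat] at h hΔx ⊢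
    simpa [h] using hΔx
  have hg₂sq : ¬(g₂ ^ 2).IsRoot x := by simpa [IsRoot] using hg₂
  rw [← rootMultiplicity_mul_of_not_isRoot hg₂sq, sq_mul_weighted_wronskian_eq]
  exact rootMultiplicity_mul_sub_mul_derivative hΔ hΔx hg₃ _

end IsDomain

end Polynomial

theorem stmt5_general (g2 g3 : ℝ[X]) (a b a' b' : ℕ) (c c' : ℝ)
    (ha : 1 ≤ a) (hb : 1 ≤ b) (hc : 0 < c) (hc' : c' ≠ 0)
    (hΔ : g2 ^ 3 - 27 * g3 ^ 2 = C c * X ^ a * (1 - X) ^ b)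
    (hP : 2 * g2 * derivative g3 - 3 * derivative g2 * g3
        = C c' * X ^ a' * (1 - X) ^ b')
    (h20 : 0 < g2.eval 0) (h21 : 0 < g2.eval 1) :
    a' = a - 1 ∧ b' = b - 1 := by
  have hord₀ := rootMultiplicity_zero_C_mul_X_pow_mul_one_sub_X_pow hc.ne' a b
  have hord₁ := rootMultiplicity_one_C_mul_X_pow_mul_one_sub_X_pow hc.ne' a b
  have hΔ0 : g2 ^ 3 - 27 * g3 ^ 2 ≠ 0 := fun h => by
    rw [← hΔ, h, rootMultiplicity_zero] at hord₀
    omega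
  have hP_ord : ∀ x, ¬g2.IsRoot x → 0 < rootMultiplicity x (g2 ^ 3 - 27 * g3 ^ 2) →
      rootMultiplicity x (C c' * X ^ a' * (1 - X) ^ b') =
        rootMultiplicity x (C c * X ^ a * (1 - X) ^ b) - 1 := fun x hx hpos => by
    rw [← hP, ← hΔ]
    exact rootMultiplicity_weighted_wronskian hΔ0 ((rootMultiplicity_pos hΔ0).1 hpos) hx
  constructor
  · simpa [rootMultiplicity_zero_C_mul_X_pow_mul_one_sub_X_pow hc', hord₀] using
      hP_ord 0 h20.ne' (by rw [hΔ, hord₀]; omega)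
  · simpa [rootMultiplicity_one_C_mul_X_pow_mul_one_sub_X_pow hc', hord₁] using
      hP_ord 1 h21.ne' (by rw [hΔ, hord₁]; omega)

/-- If `g₂, g₃ ∈ ℝ[t]` satisfy `Δ = g₂³ - 27g₃² = c·tᵃ·(1-t)ᵇ` with `c > 0`,
`a, b ≥ 1`, and `2g₂g₃' - 3g₂'g₃ = c'·t^{a'}·(1-t)^{b'}` with `c' ≠ 0`, and
`g₂(0), g₂(1) > 0`, `g₃(0)·g₃(1) < 0`, then `a' = a - 1` and `b' = b - 1`. -/
theorem stmt5 (g2 g3 : ℝ[X]) (a b a' b' : ℕ) (c c' : ℝ)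
    (ha : 1 ≤ a) (hb : 1 ≤ b) (hc : 0 < c) (hc' : c' ≠ 0)
    (hΔ : g2 ^ 3 - 27 * g3 ^ 2 = C c * X ^ a * (1 - X) ^ b)
    (hP : 2 * g2 * derivative g3 - 3 * derivative g2 * g3
        = C c' * X ^ a' * (1 - X) ^ b')
    (h20 : 0 < g2.eval 0) (h21 : 0 < g2.eval 1)
    (h3 : g3.eval 0 * g3.eval 1 < 0) :
    a' = a - 1 ∧ b' = b - 1 :=
  stmt5_general g2 g3 a b a' b' c c' ha hb hc hc' hΔ hP h20 h21
end

section
/- Let l be an odd positive integer and ζ = exp(2πi/l). Then the determinant of the ((l-1)/2) × ((l-1)/2) matrix with (p,q) entry ζ^{pq} - ζ^{-pq} (for 1 ≤ p,q ≤ (l-1)/2) satisfies det² = (-l)^{(l-1)/2}; equivalently det = ±√((-l)^{(l-1)/2}). -/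
/-!
For a primitive `(2n+1)`-th root of unity `x`, the sine matrix `S = (x^{pq} - x^{-pq})` satisfies
`S² = -(2n+1) I`, whence `det S ² = (-(2n+1))ⁿ`. Indeed
`(a^q - a^{-q})(b^q - b^{-q}) = ((ab)^q + (ab)^{-q}) - ((a/b)^q + (a/b)^{-q})`, so the entry
`(p, r)` of `S²` is `σ(x^{p+r}) - σ(x^{p-r})` with `σ(y) = ∑_{j=1}^n (y^j + y^{-j})`. Since the
sum of all `(2n+1)`-th roots of unity vanishes, `σ(y) = -1` for every such root `y ≠ 1`,
while `σ(1) = 2n`; and `x^{p+r} ≠ 1` always, `x^{p-r} = 1` only for `p = r`.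
-/

open Finset

section SineMatrix

variable {K : Type*} [Field K]

theorem sum_range_pow_add_inv_pow_eq_neg_one {x : K} {n : ℕ} (hx : x ^ (2 * n + 1) = 1)
    (hx1 : x ≠ 1) : ∑ j ∈ range n, (x ^ (j + 1) + x⁻¹ ^ (j + 1)) = -1 := by
  have hgeom : ∑ i ∈ range (2 * n + 1), x ^ i = 0 := by
    rw [geom_sum_eq hx1, hx, sub_self, zero_div]
  -- `x⁻¹ ^ (j + 1) = x ^ (2 * n - j)`, and these exponents run over `n + 1, …, 2 * n`
  have hinv : ∑ j ∈ range n, x⁻¹ ^ (j + 1) = ∑ j ∈ range n, x ^ (n + 1 + j) := by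
    rw [← sum_range_reflect]
    refine sum_congr rfl fun j hj => ?_
    have hj : j < n := mem_range.mp hj
    rw [inv_pow, eq_comm]
    refine eq_inv_of_mul_eq_one_left ?_
    rw [← pow_add, ← hx]
    congr 1
    omega
  rw [show 2 * n + 1 = n + 1 + n by omega, sum_range_add, sum_range_succ'] at hgeom
  rw [sum_add_distrib, hinv]
  linear_combination hgeom

theorem pow_sub_inv_pow_mul_pow_sub_inv_pow (a b : K) (k : ℕ) :
    (a ^ k - a⁻¹ ^ k) * (b ^ k - b⁻¹ ^ k) =
      ((a * b) ^ k + (a * b)⁻¹ ^ k) - ((a * b⁻¹) ^ k + (a * b⁻¹)⁻¹ ^ k) := by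
  simp only [mul_pow, mul_inv, inv_pow, inv_inv]
  ring

def sineMatrix (x : K) (n : ℕ) : Matrix (Fin n) (Fin n) K :=
  Matrix.of fun p q => x ^ ((p.1 + 1) * (q.1 + 1)) - x⁻¹ ^ ((p.1 + 1) * (q.1 + 1))

theorem sineMatrix_mul_sineMatrix_apply (x : K) (n : ℕ) (p r : Fin n) :
    (sineMatrix x n * sineMatrix x n) p r =
      ∑ q ∈ range n, ((x ^ (p.1 + 1) * x ^ (r.1 + 1)) ^ (q + 1) +
        (x ^ (p.1 + 1) * x ^ (r.1 + 1))⁻¹ ^ (q + 1)) -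
      ∑ q ∈ range n, ((x ^ (p.1 + 1) * (x ^ (r.1 + 1))⁻¹) ^ (q + 1) +
        (x ^ (p.1 + 1) * (x ^ (r.1 + 1))⁻¹)⁻¹ ^ (q + 1)) := by
  rw [← Fin.sum_univ_eq_sum_range (fun q => _ ^ (q + 1) + _⁻¹ ^ (q + 1)),
    ← Fin.sum_univ_eq_sum_range (fun q => _ ^ (q + 1) + _⁻¹ ^ (q + 1)), ← sum_sub_distrib,
    Matrix.mul_apply]
  refine sum_congr rfl fun q _ => ?_
  rw [← pow_sub_inv_pow_mul_pow_sub_inv_pow]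
  simp only [sineMatrix, Matrix.of_apply]
  rw [mul_comm (q.1 + 1) (r.1 + 1)]
  simp only [pow_mul, inv_pow]

theorem sineMatrix_mul_self {x : K} {n : ℕ} (hx : IsPrimitiveRoot x (2 * n + 1)) :
    sineMatrix x n * sineMatrix x n = (-(2 * n + 1 : K)) • 1 := by
  have hx0 : x ≠ 0 := hx.ne_zero (by omega)
  have hroot : ∀ a, (x ^ a) ^ (2 * n + 1) = 1 := fun a => by
    rw [← pow_mul, mul_comm, pow_mul, hx.pow_eq_one, one_pow]
  ext p r
  have hp := p.2
  have hr := r.2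
  have hsum_add := sum_range_pow_add_inv_pow_eq_neg_one
    (x := x ^ (p.1 + 1) * x ^ (r.1 + 1)) (by rw [mul_pow, hroot, hroot, one_mul])
    (by rw [← pow_add]; exact hx.pow_ne_one_of_pos_of_lt (by omega) (by omega))
  rw [sineMatrix_mul_sineMatrix_apply, hsum_add, Matrix.smul_apply, Matrix.one_apply, smul_eq_mul]
  by_cases hpr : p = r
  · subst hpr
    simp only [mul_inv_cancel₀ (pow_ne_zero _ hx0), one_pow, inv_one, sum_const, card_range,
      nsmul_eq_mul, if_true]
    ring
  · have hne : x ^ (p.1 + 1) * (x ^ (r.1 + 1))⁻¹ ≠ 1 := by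
      rw [Ne, mul_inv_eq_one₀ (pow_ne_zero _ hx0)]
      exact fun h => hpr (Fin.ext (by have := hx.pow_inj (by omega) (by omega) h; omega))
    rw [sum_range_pow_add_inv_pow_eq_neg_one (by rw [mul_pow, inv_pow, hroot, hroot, inv_one,
      one_mul]) hne, if_neg hpr]
    ring

theorem det_sineMatrix_sq {x : K} {n : ℕ} (hx : IsPrimitiveRoot x (2 * n + 1)) :
    (sineMatrix x n).det ^ 2 = (-(2 * n + 1 : K)) ^ n := by
  rw [sq, ← Matrix.det_mul, sineMatrix_mul_self hx, Matrix.det_smul, Matrix.det_one, mul_one,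
    Fintype.card_fin]

end SineMatrix

theorem stmt7_general (l : ℕ) (hl : Odd l)
    (ζ : ℂ) (hζ : ζ = Complex.exp (2 * Real.pi * Complex.I / l))
    (A : Matrix (Fin ((l - 1) / 2)) (Fin ((l - 1) / 2)) ℂ)
    (hA : ∀ p q, A p q =
      ζ ^ ((p.1 + 1) * (q.1 + 1)) - ζ⁻¹ ^ ((p.1 + 1) * (q.1 + 1))) :
    A.det ^ 2 = (-(l : ℂ)) ^ ((l - 1) / 2) := by
  have hl_eq : l = 2 * ((l - 1) / 2) + 1 := by obtain ⟨k, rfl⟩ := hl; omega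
  have hprim : IsPrimitiveRoot ζ (2 * ((l - 1) / 2) + 1) := by
    rw [← hl_eq, hζ]
    exact Complex.isPrimitiveRoot_exp l (by omega)
  have hA_eq : A = sineMatrix ζ ((l - 1) / 2) := Matrix.ext hA
  rw [hA_eq, det_sineMatrix_sq hprim]
  congr 2
  exact_mod_cast hl_eq.symm

/-- Let `l` be an odd positive integer and `ζ = exp(2πi/l)`. The determinant of
the `((l-1)/2) × ((l-1)/2)` matrix with `(p,q)` entry `ζ^{pq} - ζ^{-pq}`
(for `1 ≤ p, q ≤ (l-1)/2`) satisfies `det² = (-l)^{(l-1)/2}`. -/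
theorem stmt7 (l : ℕ) (hl : Odd l) (hl0 : 0 < l)
    (ζ : ℂ) (hζ : ζ = Complex.exp (2 * Real.pi * Complex.I / l))
    (A : Matrix (Fin ((l - 1) / 2)) (Fin ((l - 1) / 2)) ℂ)
    (hA : ∀ p q, A p q =
      ζ ^ ((p.1 + 1) * (q.1 + 1)) - ζ⁻¹ ^ ((p.1 + 1) * (q.1 + 1))) :
    A.det ^ 2 = (-(l : ℂ)) ^ ((l - 1) / 2) :=
  stmt7_general l hl ζ hζ A hA
end
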